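/- arXiv:0705.2830 — 2 statements merged into one kernel-verified Lean document; each statement's English description precedes it below -/
import Mathlib

section
/- The real arrangement in R^{n+1} consisting of the hyperplanes {x_i = x_j}, {x_i = -x_j} for 1 ≤ i < j ≤ n+1 together with {x_1 = 0} is simplicial: every connected component of the complement is an open simplicial cone, i.e. of the form {x : f_1(x) > 0, ..., f_{n+1}(x) > 0} for n+1 linearly independent linear forms f_1,...,f_{n+1}. -/
/-!
A signed permutation `T` of the coordinates permutes the hyperplanes `xᵢ = ±xⱼ` and moves
`x₀ = 0` to some `xₘ = 0`; choosing it to sort `|xᵢ|` and make all coordinates nonnegative, it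
sends a point `x` of the complement to `z` with `0 ≤ z₀ < z₁ < ⋯ < zₙ`. In these coordinates the
chamber is `{0 < z₀ < z₁ < ⋯ < zₙ}` if `m = 0` and `{|z₀| < z₁ < ⋯ < zₙ}` otherwise. Both are cut
out by the forms `zₖ₊₁ - zₖ` together with one form (`z₀`, resp. `z₀ + z₁`) that does not vanish
on `(1, …, 1)`, hence by `n + 1` linearly independent forms. Being open, convex and relatively
closed in the complement, such a cone is a connected component of it.
-/

/-- A set `C` is an open simplicial cone if it is the locus of positivity of a linearly
independent family of `N` linear forms. -/
def IsSimplicialCone {N : ℕ} (C : Set (Fin N → ℝ)) : Prop :=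
  ∃ f : Fin N → ((Fin N → ℝ) →ₗ[ℝ] ℝ),
    LinearIndependent ℝ f ∧ C = {x | ∀ i, 0 < f i x}

/-- The complement in `ℝ^{n+1}` of the arrangement of the hyperplanes `{xᵢ = ±xⱼ}` for
`i ≠ j` together with `{x₀ = 0}`. -/
def arrComplement (n : ℕ) : Set (Fin (n + 1) → ℝ) :=
  {x | (∀ i j, i ≠ j → x i ≠ x j ∧ x i ≠ -x j) ∧ x 0 ≠ 0}

open Set Function

theorem linearIndependent_of_apply_eq_ite {ι R M : Type*} [CommRing R] [AddCommGroup M]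
    [Module R M] [DecidableEq ι] (f : ι → Module.Dual R M) (v : ι → M)
    (h : ∀ i j, f i (v j) = if i = j then 1 else 0) : LinearIndependent R f := by
  rw [linearIndependent_iff']
  intro s c hs i hi
  simpa [h, hi] using congr($hs (v i))

theorem connectedComponentIn_eq_of_isOpen {X : Type*} [TopologicalSpace X]
    {S C : Set X} {x : X} (hCc : IsPreconnected C) (hCo : IsOpen C) (hx : x ∈ C) (hCS : C ⊆ S)
    (hcl : S ∩ closure C ⊆ C) : connectedComponentIn S x = C := by
  refine subset_antisymm (fun y hy => ?_) (hCc.subset_connectedComponentIn hx hCS)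
  by_contra hyC
  have hcover : connectedComponentIn S x ⊆ C ∪ (closure C)ᶜ := fun z hz =>
    or_iff_not_imp_right.2 fun hzC => hcl ⟨connectedComponentIn_subset S x hz, not_not.1 hzC⟩
  obtain ⟨z, -, hzC, hzC'⟩ := isPreconnected_connectedComponentIn C (closure C)ᶜ hCo
    isClosed_closure.isOpen_compl hcover ⟨x, mem_connectedComponentIn (hCS hx), hx⟩
    ⟨y, hy, fun hyC' => hyC (hcl ⟨connectedComponentIn_subset S x hy, hyC'⟩)⟩
  exact hzC' (subset_closure hzC)

theorem connectedComponentIn_eq_setOf_pos {ι E : Type*} [Finite ι] [NormedAddCommGroup E]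
    [NormedSpace ℝ E] [FiniteDimensional ℝ E] {S : Set E} (f : ι → E →ₗ[ℝ] ℝ) {x : E}
    (hx : ∀ i, 0 < f i x) (hsub : {y | ∀ i, 0 < f i y} ⊆ S)
    (hcl : ∀ y ∈ S, (∀ i, 0 ≤ f i y) → ∀ i, 0 < f i y) :
    connectedComponentIn S x = {y | ∀ i, 0 < f i y} := by
  have hC : {y | ∀ i, 0 < f i y} = ⋂ i, f i ⁻¹' Ioi 0 := by ext; simp
  have hC' : {y | ∀ i, 0 ≤ f i y} = ⋂ i, f i ⁻¹' Ici 0 := by ext; simp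
  have hpre : IsPreconnected {y | ∀ i, 0 < f i y} := by
    rw [hC]
    exact (convex_iInter fun i => convex_halfSpace_gt (f i).isLinear 0).isPreconnected
  have hopen : IsOpen {y | ∀ i, 0 < f i y} := by
    rw [hC]
    exact isOpen_iInter_of_finite fun i => isOpen_Ioi.preimage (f i).continuous_of_finiteDimensional
  have hclosed : IsClosed {y | ∀ i, 0 ≤ f i y} := by
    rw [hC']
    exact isClosed_iInter fun i => isClosed_Ici.preimage (f i).continuous_of_finiteDimensional
  exact connectedComponentIn_eq_of_isOpen hpre hopen hx hsub fun y ⟨hyS, hy⟩ =>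
    hcl y hyS (closure_minimal (fun z hz i => (hz i).le) hclosed hy)

section ChainForms

variable {R : Type*} [CommRing R] {n : ℕ}

def diffForms (n : ℕ) : Fin n → Module.Dual R (Fin (n + 1) → R) :=
  fun k => LinearMap.proj (R := R) (φ := fun _ => R) k.succ - LinearMap.proj k.castSucc

@[simp]
theorem diffForms_apply (k : Fin n) (z : Fin (n + 1) → R) :
    diffForms n k z = z k.succ - z k.castSucc := rfl

theorem linearIndependent_diffForms : LinearIndependent R (diffForms (R := R) n) := by
  refine linearIndependent_of_apply_eq_ite _ (fun j i => if j.succ ≤ i then 1 else 0) ?_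
  intro k j
  simp only [diffForms_apply, Fin.succ_le_succ_iff, Fin.succ_le_castSucc_iff]
  rcases lt_trichotomy k j with h | rfl | h
  · simp [h.ne, h.not_ge, h.le.not_gt]
  · simp
  · simp [h.ne', h.le, h]

def chainForms (g : Module.Dual R (Fin (n + 1) → R)) :
    Fin (n + 1) → Module.Dual R (Fin (n + 1) → R) :=
  Fin.cons g (diffForms n)

theorem linearIndependent_chainForms {K : Type*} [Field K] {g : Module.Dual K (Fin (n + 1) → K)}
    (hg : g (fun _ => 1) ≠ 0) : LinearIndependent K (chainForms g) := by
  refine linearIndependent_finCons.2 ⟨linearIndependent_diffForms, fun hspan => hg ?_⟩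
  have hle : Submodule.span K (range (diffForms n)) ≤
      LinearMap.ker (LinearMap.applyₗ (fun _ => (1 : K))) := by
    rw [Submodule.span_le]
    rintro _ ⟨k, rfl⟩
    simp
  simpa using hle hspan

theorem forall_chainForms_pos_iff [PartialOrder R] [IsOrderedAddMonoid R]
    {g : Module.Dual R (Fin (n + 1) → R)} {z : Fin (n + 1) → R} :
    (∀ i, 0 < chainForms g i z) ↔ 0 < g z ∧ StrictMono z := by
  simp [chainForms, Fin.forall_fin_succ, Fin.strictMono_iff_lt_succ]

theorem forall_chainForms_nonneg_iff [PartialOrder R] [IsOrderedAddMonoid R]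
    {g : Module.Dual R (Fin (n + 1) → R)} {z : Fin (n + 1) → R} :
    (∀ i, 0 ≤ chainForms g i z) ↔ 0 ≤ g z ∧ Monotone z := by
  simp [chainForms, Fin.forall_fin_succ, Fin.monotone_iff_le_succ]

end ChainForms

def arrComplementAt {ι : Type*} (m : ι) : Set (ι → ℝ) :=
  {z | Injective (fun i => |z i|) ∧ z m ≠ 0}

theorem arrComplement_eq_arrComplementAt (n : ℕ) : arrComplement n = arrComplementAt 0 := by
  ext x
  simp only [arrComplement, arrComplementAt, mem_ofPred_eq, and_congr_left_iff, Injective,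
    abs_eq_abs]
  refine fun _ => ⟨fun h i j hij => ?_, fun h i j hne => ⟨fun he => hne (h (Or.inl he)),
    fun he => hne (h (Or.inr he))⟩⟩
  by_contra hne
  exact hij.elim (h i j hne).1 (h i j hne).2

theorem strictMono_of_mem_arrComplementAt {ι : Type*} [LinearOrder ι] {m : ι} {z : ι → ℝ}
    (hz : z ∈ arrComplementAt m) (hmono : Monotone z) : StrictMono z :=
  hmono.strictMono_of_injective (Injective.of_comp (f := abs) hz.1)

theorem exists_linearEquiv_apply_eq_abs {ι : Type*} (x : ι → ℝ) (σ : Equiv.Perm ι) :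
    ∃ T : (ι → ℝ) ≃ₗ[ℝ] (ι → ℝ), T x = (fun k => |x (σ k)|) ∧
      ∀ m, T ⁻¹' arrComplementAt (σ.symm m) = arrComplementAt m := by
  let u : ι → ℝˣ := fun k => if x (σ k) < 0 then -1 else 1
  have hu : ∀ k t, |(u k : ℝ) * t| = |t| := by
    intro k t
    by_cases h : x (σ k) < 0 <;> simp [u, h]
  refine ⟨(LinearEquiv.funCongrLeft ℝ ℝ σ).trans
    (LinearEquiv.piCongrRight fun k => LinearEquiv.smulOfUnit (u k)), ?_, fun m => ?_⟩
  · funext k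
    by_cases h : x (σ k) < 0
    · simp [u, h, abs_of_neg h, LinearEquiv.smulOfUnit]
    · simp [u, h, abs_of_nonneg (not_lt.1 h), LinearEquiv.smulOfUnit]
  · ext y
    simp [arrComplementAt, LinearEquiv.smulOfUnit, Units.smul_def, hu]
    exact fun _ => EquivLike.injective_comp σ (fun i => |y i|)

theorem mem_arrComplementAt_zero {n : ℕ} {z : Fin (n + 1) → ℝ} (hz : StrictMono z)
    (h0 : 0 < z 0) : z ∈ arrComplementAt 0 := by
  have hpos : ∀ i, 0 < z i := fun i => h0.trans_le (hz.monotone (Fin.zero_le i))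
  refine ⟨fun i j hij => hz.injective ?_, h0.ne'⟩
  simpa [abs_of_pos (hpos i), abs_of_pos (hpos j)] using hij

theorem mem_arrComplementAt_of_add_pos {n : ℕ} [NeZero n] {m : Fin (n + 1)} (hm : m ≠ 0)
    {z : Fin (n + 1) → ℝ} (hz : StrictMono z) (h : 0 < z 0 + z 1) : z ∈ arrComplementAt m := by
  have habs0 : |z 0| < z 1 := abs_lt.2 ⟨by linarith, hz Fin.one_pos'⟩
  have hlt : ∀ i, i ≠ 0 → |z 0| < z i := fun i hi =>
    habs0.trans_le (hz.monotone (Fin.one_le_of_ne_zero hi))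
  have hpos : ∀ i, i ≠ 0 → 0 < z i := fun i hi => (abs_nonneg _).trans_lt (hlt i hi)
  have habs : StrictMono fun i => |z i| := by
    intro i j hij
    dsimp only
    have hj : j ≠ 0 := ((Fin.zero_le i).trans_lt hij).ne'
    rw [abs_of_pos (hpos j hj)]
    rcases eq_or_ne i 0 with rfl | hi
    · exact hlt j hj
    · rw [abs_of_pos (hpos i hi)]
      exact hz hij
  exact ⟨habs.injective, (hpos m hm).ne'⟩

theorem add_ne_zero_of_mem_arrComplementAt {n : ℕ} [NeZero n] {m : Fin (n + 1)}
    {z : Fin (n + 1) → ℝ} (hz : z ∈ arrComplementAt m) : z 0 + z 1 ≠ 0 := by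
  intro h
  refine Fin.one_pos'.ne (hz.1 ?_)
  simp only [eq_neg_of_add_eq_zero_left h, abs_neg]

theorem isSimplicialCone_connectedComponentIn_preimage {n : ℕ}
    (T : (Fin (n + 1) → ℝ) ≃ₗ[ℝ] (Fin (n + 1) → ℝ)) {m : Fin (n + 1)}
    {g : Module.Dual ℝ (Fin (n + 1) → ℝ)} (hg : g (fun _ => 1) ≠ 0)
    (hsub : ∀ z, StrictMono z → 0 < g z → z ∈ arrComplementAt m)
    (hne : ∀ z ∈ arrComplementAt m, g z ≠ 0) {x : Fin (n + 1) → ℝ}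
    (hTx : StrictMono (T x)) (hgx : 0 < g (T x)) :
    IsSimplicialCone (connectedComponentIn (T ⁻¹' arrComplementAt m) x) := by
  have hpos : ∀ y, (∀ i, 0 < T.dualMap (chainForms g i) y) ↔ 0 < g (T y) ∧ StrictMono (T y) :=
    fun y => by simp only [LinearEquiv.dualMap_apply, forall_chainForms_pos_iff]
  have hnonneg : ∀ y, (∀ i, 0 ≤ T.dualMap (chainForms g i) y) ↔ 0 ≤ g (T y) ∧ Monotone (T y) :=
    fun y => by simp only [LinearEquiv.dualMap_apply, forall_chainForms_nonneg_iff]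
  refine ⟨_, (linearIndependent_chainForms hg).map' _ T.dualMap.ker,
    connectedComponentIn_eq_setOf_pos _ ((hpos x).2 ⟨hgx, hTx⟩) (fun y hy => ?_)
      (fun y hy hy' => ?_)⟩
  · obtain ⟨hgy, hTy⟩ := (hpos y).1 hy
    exact hsub _ hTy hgy
  · obtain ⟨hgy, hTy⟩ := (hnonneg y).1 hy'
    exact (hpos y).2 ⟨hgy.lt_of_ne' (hne _ hy), strictMono_of_mem_arrComplementAt hy hTy⟩

/-- The arrangement in `ℝ^{n+1}` consisting of the hyperplanes `{xᵢ = xⱼ}`, `{xᵢ = -xⱼ}` for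
`i < j` together with `{x₀ = 0}` is simplicial: every chamber (connected component of the
complement) is an open simplicial cone. -/
theorem arrangement_is_simplicial (n : ℕ) :
    ∀ x ∈ arrComplement n, IsSimplicialCone (connectedComponentIn (arrComplement n) x) := by
  intro x hx
  rw [arrComplement_eq_arrComplementAt] at hx ⊢
  set σ := Tuple.sort fun i => |x i|
  obtain ⟨T, hTx, hT⟩ := exists_linearEquiv_apply_eq_abs x σ
  have hsort : StrictMono (T x) := hTx ▸
    (Tuple.monotone_sort _).strictMono_of_injective (hx.1.comp σ.injective)
  have hTx0 : 0 ≤ T x 0 := hTx ▸ abs_nonneg _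
  rw [← hT] at hx ⊢
  rcases eq_or_ne (σ.symm 0) 0 with hm | hm
  · rw [hm] at hx ⊢
    exact isSimplicialCone_connectedComponentIn_preimage T (g := LinearMap.proj 0) (by simp)
      (fun _ => mem_arrComplementAt_zero) (fun _ hz => hz.2) hsort (hTx0.lt_of_ne' hx.2)
  · have : NeZero n := ⟨by rintro rfl; exact hm (Fin.fin_one_eq_zero _)⟩
    exact isSimplicialCone_connectedComponentIn_preimage T
      (g := LinearMap.proj (R := ℝ) (φ := fun _ => ℝ) 0 + LinearMap.proj 1) (by norm_num)
      (fun _ => mem_arrComplementAt_of_add_pos hm) (fun _ => add_ne_zero_of_mem_arrComplementAt)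
      hsort (add_pos_of_nonneg_of_pos hTx0 (hTx0.trans_lt (hsort Fin.one_pos')))
end

section
/- The quotient polynomial of the quasi-Poincaré polynomial of affine B_n by the weighted Poincaré polynomial of B_n equals ∏_{i=1}^{n-1}(1+q^i), and this product factors into cyclotomic polynomials as ∏_{h ≤ n} Φ_{2h}(q)^{⌊(n-1)/h⌋ - ⌊(n-1)/(2h)⌋}. -/
/-! `1 + qⁱ = (q²ⁱ - 1)/(qⁱ - 1)` is the product of the `Φ_d` with `d ∣ 2i`, `d ∤ i`, that is
`d = 2h` with `h ∣ i` and `2h ∤ i`. So `Φ_{2h}` occurs in `∏_{0<i<n} (1 + qⁱ)` once for each odd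
multiple `i < n` of `h`, and there are `⌊(n-1)/h⌋ - ⌊(n-1)/(2h)⌋` of them. The first identity
is `[2m]_q!! = [m]_q! ∏_{k=1}^m (1 + q^k)` together with `[m+1]_q! = [m]_q! [m+1]_q`. -/

open Polynomial Finset

namespace Stmt13

/-- We work in `ℚ[q][t]`: `q` is the inner variable, `t` the outer one. -/
noncomputable abbrev R : Type := Polynomial (Polynomial ℚ)

noncomputable def q : R := Polynomial.C Polynomial.X
noncomputable def t : R := Polynomial.X

/-- `[k]_q = (q^k - 1)/(q - 1) = 1 + q + ⋯ + q^{k-1}`. -/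
noncomputable def qInt (k : ℕ) : R := ∑ j ∈ Finset.range k, q ^ j

/-- `[m]_q! = ∏_{k=1}^m [k]_q`. -/
noncomputable def qFact (m : ℕ) : R := ∏ k ∈ Finset.range m, qInt (k + 1)

/-- `[2m]_q!! = ∏_{k=1}^m [k]_q (1 + q^k)`. -/
noncomputable def qDoubleFact (m : ℕ) : R := ∏ k ∈ Finset.range m, qInt (k + 1) * (1 + q ^ (k + 1))

/-- The quasi-Poincaré polynomial `Ŵ(q,t) = [2(n-1)]_q!! ⬝ [n]_q ⬝ ∏_{i=0}^{n-1}(1 + t qⁱ)`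
of affine `Bₙ`. -/
noncomputable def What (n : ℕ) : R :=
  qDoubleFact (n - 1) * qInt n * ∏ i ∈ Finset.range n, (1 + t * q ^ i)

/-- The weighted Poincaré polynomial `W_{Bₙ}(q,t) = [2n]_{q,t}!! = [n]_q! ⬝ ∏_{i=0}^{n-1}(1 + t qⁱ)`. -/
noncomputable def WB (n : ℕ) : R :=
  qFact n * ∏ i ∈ Finset.range n, (1 + t * q ^ i)

theorem divisors_two_mul_sdiff_divisors (i : ℕ) :
    (2 * i).divisors \ i.divisors = {h ∈ i.divisors | ¬ 2 * h ∣ i}.image (2 * ·) := by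
  ext d
  simp only [mem_sdiff, Nat.mem_divisors, mem_image, mem_filter]
  constructor
  · rintro ⟨⟨hd, hi⟩, hnd⟩
    have hdi : ¬ d ∣ i := fun h => hnd ⟨h, by omega⟩
    obtain ⟨h, rfl⟩ : 2 ∣ d := by
      by_contra h2
      exact hdi ((Nat.coprime_two_right.mpr (Nat.odd_iff.mpr (by omega))).dvd_of_dvd_mul_left hd)
    exact ⟨h, ⟨⟨Nat.dvd_of_mul_dvd_mul_left two_pos hd, by omega⟩, hdi⟩, rfl⟩
  · rintro ⟨h, ⟨⟨hh, hi⟩, hnd⟩, rfl⟩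
    exact ⟨⟨mul_dvd_mul_left 2 hh, by omega⟩, fun hh' => hnd hh'.1⟩

theorem one_add_X_pow_eq_prod_cyclotomic (S : Type*) [CommRing S] {i : ℕ} (hi : i ≠ 0) :
    (1 + X ^ i : S[X]) = ∏ h ∈ i.divisors with ¬ 2 * h ∣ i, cyclotomic (2 * h) S := by
  have hfactor := X_pow_sub_one_mul_prod_cyclotomic_eq_X_pow_sub_one_of_dvd S
    (dvd_mul_left i 2) (by omega : 2 * i ≠ 0)
  rw [divisors_two_mul_sdiff_divisors,
    prod_image (mul_right_injective₀ two_ne_zero).injOn] at hfactor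
  refine ((monic_X_pow_sub_C (1 : S) hi).isRegular.left ?_).symm
  beta_reduce
  rw [C_1, hfactor]
  ring

theorem card_filter_Ico_dvd_and_not_two_mul_dvd (n h : ℕ) :
    #{i ∈ Ico 1 n | h ∣ i ∧ ¬ 2 * h ∣ i} = (n - 1) / h - (n - 1) / (2 * h) := by
  have hIco : Ico 1 n = Ioc 0 (n - 1) := by ext; simp only [mem_Ico, mem_Ioc]; omega
  rw [hIco, filter_and_not, card_sdiff_of_subset, Nat.Ioc_filter_dvd_card_eq_div,
    Nat.Ioc_filter_dvd_card_eq_div]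
  exact monotone_filter_right _ fun _ _ => (dvd_mul_left h 2).trans

theorem prod_Ico_one_add_X_pow_eq_prod_cyclotomic (S : Type*) [CommRing S] (n : ℕ) :
    ∏ i ∈ Ico 1 n, (1 + X ^ i : S[X]) =
      ∏ h ∈ Icc 1 n, cyclotomic (2 * h) S ^ ((n - 1) / h - (n - 1) / (2 * h)) := by
  calc ∏ i ∈ Ico 1 n, (1 + X ^ i : S[X])
      = ∏ i ∈ Ico 1 n, ∏ h ∈ i.divisors with ¬ 2 * h ∣ i, cyclotomic (2 * h) S :=
        prod_congr rfl fun i hi =>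
          one_add_X_pow_eq_prod_cyclotomic S (by rw [mem_Ico] at hi; omega)
    _ = ∏ h ∈ Icc 1 n, ∏ i ∈ Ico 1 n with h ∣ i ∧ ¬ 2 * h ∣ i, cyclotomic (2 * h) S := by
        refine prod_comm' fun i h => ?_
        simp only [mem_filter, Nat.mem_divisors, mem_Ico, mem_Icc]
        constructor
        · rintro ⟨hi, ⟨hh, -⟩, hnd⟩
          have := Nat.le_of_dvd (by omega) hh
          exact ⟨⟨hi, hh, hnd⟩, Nat.pos_of_dvd_of_pos hh (by omega), by omega⟩
        · rintro ⟨⟨hi, hh, hnd⟩, -⟩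
          exact ⟨hi, ⟨hh, by omega⟩, hnd⟩
    _ = _ := by
        simp only [prod_const, card_filter_Ico_dvd_and_not_two_mul_dvd]

theorem qFact_succ (m : ℕ) : qFact (m + 1) = qFact m * qInt (m + 1) :=
  prod_range_succ _ m

theorem qDoubleFact_eq_qFact_mul (m : ℕ) :
    qDoubleFact m = qFact m * ∏ i ∈ Ico 1 (m + 1), (1 + q ^ i) := by
  rw [qDoubleFact, qFact, prod_mul_distrib, prod_Ico_eq_prod_range, Nat.add_sub_cancel]
  simp only [add_comm 1]

theorem What_eq_WB_mul (n : ℕ) (hn : 1 ≤ n) : What n = WB n * ∏ i ∈ Ico 1 n, (1 + q ^ i) := by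
  obtain ⟨m, rfl⟩ : ∃ m, n = m + 1 := ⟨n - 1, by omega⟩
  rw [What, WB, Nat.add_sub_cancel, qDoubleFact_eq_qFact_mul, qFact_succ]
  ring

/-- The quotient of the quasi-Poincaré polynomial of affine `Bₙ` by the weighted Poincaré
polynomial of `Bₙ` equals `∏_{i=1}^{n-1}(1 + qⁱ)`, which factors into cyclotomic polynomials
as `∏_{1 ≤ h ≤ n} Φ_{2h}(q)^{⌊(n-1)/h⌋ - ⌊(n-1)/(2h)⌋}`. -/
theorem quotient_poincare_factorization (n : ℕ) (hn : 1 ≤ n) :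
    What n = WB n * ∏ i ∈ Finset.Ico 1 n, (1 + q ^ i) ∧
    (∏ i ∈ Finset.Ico 1 n, (1 + q ^ i)) =
      ∏ h ∈ Finset.Icc 1 n,
        (Polynomial.C (Polynomial.cyclotomic (2 * h) ℚ) : R) ^ ((n - 1) / h - (n - 1) / (2 * h)) := by
  refine ⟨What_eq_WB_mul n hn, ?_⟩
  simpa [q, map_prod] using congrArg C (prod_Ico_one_add_X_pow_eq_prod_cyclotomic ℚ n)

end Stmt13
end
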